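/- Let p be a prime and G ⊆ GL_n(F_p) a subgroup all of whose elements are unipotent (i.e., (g−1)^n = 0 for all g ∈ G). Then G is a p-group, and in particular the order of G divides p^{n(n−1)/2}. -/

import Mathlib

/-!
Since `p = 0` in `𝔽_p`-algebras, `(g - 1) ^ p ^ n = g ^ p ^ n - 1`, and `(g - 1) ^ p ^ n = 0`
because `n ≤ p ^ n`; so every element of `G` has `p`-power order. A `p`-subgroup of `GL_n(𝔽_q)`
has order dividing the `p`-part `q ^ (n(n-1)/2)` of `|GL_n(𝔽_q)| = ∏ (q ^ n - q ^ i)`.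
-/

theorem pow_prime_pow_eq_one_of_sub_one_pow_eq_zero {R : Type*} [Ring R] {p : ℕ} [Fact p.Prime]
    [Algebra (ZMod p) R] {x : R} {n : ℕ} (hx : (x - 1) ^ n = 0) : x ^ p ^ n = 1 := by
  nontriviality R
  have : CharP R p := charP_of_injective_algebraMap (algebraMap (ZMod p) R).injective p
  have hle : n ≤ p ^ n := (Nat.lt_pow_self (Fact.out : p.Prime).one_lt).le
  have hzero := pow_eq_zero_of_le hle hx
  rwa [sub_pow_char_pow_of_commute p n (Commute.one_right x), one_pow, sub_eq_zero] at hzero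

theorem IsPGroup.of_forall_sub_one_pow_eq_zero {R : Type*} [Ring R] {p : ℕ} [Fact p.Prime]
    [Algebra (ZMod p) R] {n : ℕ} {G : Subgroup Rˣ} (hG : ∀ g ∈ G, ((g : R) - 1) ^ n = 0) :
    IsPGroup p G := fun g =>
  ⟨n, Subtype.ext <| Units.ext <| pow_prime_pow_eq_one_of_sub_one_pow_eq_zero (hG g g.2)⟩

theorem IsPGroup.card_dvd_of_card_eq_pow_mul {G : Type*} [Group G] [Finite G] {p N c : ℕ}
    [Fact p.Prime] {H : Subgroup G} (hH : IsPGroup p H) (hG : Nat.card G = p ^ N * c)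
    (hc : p.Coprime c) : Nat.card H ∣ p ^ N := by
  obtain ⟨k, hk⟩ := IsPGroup.iff_card.mp hH
  have hdvd : p ^ k ∣ p ^ N * c := hk ▸ hG ▸ H.card_subgroup_dvd_card
  exact hk ▸ (hc.pow_left k).dvd_of_dvd_mul_right hdvd

theorem Nat.coprime_pow_sub_one {q m : ℕ} (hq : q ≠ 0) (hm : m ≠ 0) : q.Coprime (q ^ m - 1) := by
  have h : (q ^ m - 1).Coprime (q ^ m) :=
    (Nat.coprime_self_sub_left (Nat.one_le_pow _ _ (Nat.pos_of_ne_zero hq))).mpr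
      (Nat.coprime_one_left _)
  exact (h.coprime_dvd_right (dvd_pow_self q hm)).symm

theorem Matrix.card_GL_field_eq_pow_mul_prod {𝔽 : Type*} [Field 𝔽] [Fintype 𝔽] (n : ℕ) :
    Nat.card (GL (Fin n) 𝔽) = Fintype.card 𝔽 ^ (n * (n - 1) / 2) *
      ∏ i : Fin n, (Fintype.card 𝔽 ^ (n - (i : ℕ)) - 1) := by
  rw [Matrix.card_GL_field, ← Finset.sum_range_id, ← Fin.sum_univ_eq_sum_range,
    ← Finset.prod_pow_eq_pow_sum, ← Finset.prod_mul_distrib]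
  refine Finset.prod_congr rfl fun i _ => ?_
  rw [Nat.mul_sub, mul_one, ← pow_add, Nat.add_sub_cancel' i.2.le]

theorem stmt_14 (p : ℕ) (hp : p.Prime) (n : ℕ)
    (G : Subgroup (GL (Fin n) (ZMod p)))
    (hG : ∀ g ∈ G, ((g : Matrix (Fin n) (Fin n) (ZMod p)) - 1) ^ n = 0) :
    IsPGroup p G ∧ Nat.card G ∣ p ^ (n * (n - 1) / 2) := by
  have : Fact p.Prime := ⟨hp⟩
  have hPG : IsPGroup p G := IsPGroup.of_forall_sub_one_pow_eq_zero hG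
  have hcard := Matrix.card_GL_field_eq_pow_mul_prod (𝔽 := ZMod p) n
  rw [ZMod.card] at hcard
  refine ⟨hPG, hPG.card_dvd_of_card_eq_pow_mul hcard ?_⟩
  exact Nat.Coprime.prod_right fun i _ =>
    Nat.coprime_pow_sub_one hp.ne_zero (Nat.sub_ne_zero_of_lt i.2)
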